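/- Let X be a set and k ≥ 1 a natural number, and let ℱ be a finite family of predicates on k-tuples from X. Then there exist finite subsets L₁, …, L_k ⊆ X with |L_i| ≤ (2·|ℱ|)^{2^{i−1}} for each 1 ≤ i ≤ k (and consequently |L₁|·…·|L_k| ≤ (2·|ℱ|)^{2^k}) such that for every f ∈ ℱ the following two equivalences hold: Alt∃(X, …, X; f) ↔ Alt∃(L₁, …, L_k; f) and Alt∀(X, …, X; f) ↔ Alt∀(L₁, …, L_k; f). -/
import Mathlib


namespace Stmt2

/-- Alternating quantified statement: `Alt b k S f` where `b = true` starts with `∃`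
and `b = false` starts with `∀`; the `j`-th quantified variable ranges over `S j`. -/
def Alt {X : Type*} : Bool → (k : ℕ) → (Fin k → Set X) → ((Fin k → X) → Prop) → Prop
  | _, 0, _, f => f finZeroElim
  | b, (k + 1), S, f =>
    if b then ∃ u ∈ S 0, Alt (!b) k (fun i => S i.succ) (fun v => f (Fin.cons u v))
    else ∀ u ∈ S 0, Alt (!b) k (fun i => S i.succ) (fun v => f (Fin.cons u v))

universe u v

private lemma alt_succ_true {X : Type*} {k : ℕ} (S : Fin (k+1) → Set X)
    (f : (Fin (k+1) → X) → Prop) :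
    Alt true (k+1) S f ↔
      ∃ u ∈ S 0, Alt false k (fun i => S i.succ) (fun v => f (Fin.cons u v)) := by
  simp [Alt]

private lemma alt_succ_false {X : Type*} {k : ℕ} (S : Fin (k+1) → Set X)
    (f : (Fin (k+1) → X) → Prop) :
    Alt false (k+1) S f ↔
      ∀ u ∈ S 0, Alt true k (fun i => S i.succ) (fun v => f (Fin.cons u v)) := by
  simp [Alt]

private lemma opt_card {X : Type*} (o : Option X) : o.toFinset.card ≤ 1 := by
  cases o <;> simp

private lemma alt_helper {X : Type u} :
    ∀ (k : ℕ) {ι : Type (max u v)} (F : Finset ι) (f : ι → (Fin k → X) → Prop),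
    ∃ L : Fin k → Finset X,
      (∀ i : Fin k, (L i).card ≤ (2 * F.card) ^ 2 ^ (i : ℕ)) ∧
      ∀ j ∈ F, ∀ b : Bool,
        (Alt b k (fun _ => Set.univ) (f j) ↔
          Alt b k (fun i => (↑(L i) : Set X)) (f j)) := by
  intro k
  induction k with
  | zero =>
    intro ι F f
    exact ⟨finZeroElim, fun i => i.elim0, fun j _ b => Iff.rfl⟩
  | succ k ih =>
    intro ι F f
    classical
    set P : ι → X → Prop := fun j u =>
      Alt false k (fun _ => Set.univ) (fun v => f j (Fin.cons u v)) with hP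
    set Q : ι → X → Prop := fun j u =>
      Alt true k (fun _ => Set.univ) (fun v => f j (Fin.cons u v)) with hQ
    set wt : ι → Option X := fun j =>
      if h : ∃ u, P j u then some h.choose else none with hwt
    set wf : ι → Option X := fun j =>
      if h : ∃ u, ¬ Q j u then some h.choose else none with hwf
    set L0 : Finset X := F.biUnion (fun j => (wt j).toFinset ∪ (wf j).toFinset) with hL0
    have hL0card : L0.card ≤ 2 * F.card := by
      calc L0.card ≤ ∑ j ∈ F, ((wt j).toFinset ∪ (wf j).toFinset).card :=
            Finset.card_biUnion_le
        _ ≤ ∑ _j ∈ F, 2 := Finset.sum_le_sum (fun j _ =>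
            (Finset.card_union_le _ _).trans
              (Nat.add_le_add (opt_card _) (opt_card _)))
        _ = 2 * F.card := by simp [mul_comm]
    obtain ⟨L', hL'card, hL'iff⟩ :=
      ih (ι := ι × X) (F ×ˢ L0) (fun p : ι × X => fun v => f p.1 (Fin.cons p.2 v))
    refine ⟨Fin.cons L0 L', ?_, ?_⟩
    · intro i
      refine Fin.cases ?_ ?_ i
      · simpa using hL0card
      · intro i
        have h1 : (L' i).card ≤ (2 * (F ×ˢ L0).card) ^ 2 ^ (i : ℕ) := hL'card i
        have h2 : 2 * (F ×ˢ L0).card ≤ (2 * F.card) ^ 2 := by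
          rw [Finset.card_product]
          calc 2 * (F.card * L0.card) ≤ 2 * (F.card * (2 * F.card)) := by
                exact Nat.mul_le_mul_left _ (Nat.mul_le_mul_left _ hL0card)
            _ = (2 * F.card) ^ 2 := by ring
        calc ((Fin.cons L0 L' : Fin (k+1) → Finset X) i.succ).card
            = (L' i).card := by simp
          _ ≤ (2 * (F ×ˢ L0).card) ^ 2 ^ (i : ℕ) := h1
          _ ≤ ((2 * F.card) ^ 2) ^ 2 ^ (i : ℕ) := Nat.pow_le_pow_left h2 _
          _ = (2 * F.card) ^ 2 ^ ((i : ℕ) + 1) := by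
              rw [← pow_mul]
              congr 1
              rw [pow_succ]
              ring
          _ = (2 * F.card) ^ 2 ^ ((i.succ : Fin (k+1)) : ℕ) := by simp
    · intro j hj b
      cases b
      · -- b = false : ∀ case
        rw [alt_succ_false, alt_succ_false]
        simp only [Set.mem_univ, true_implies, Fin.cons_succ, Fin.cons_zero,
          Finset.mem_coe]
        constructor
        · intro h u hu
          exact (hL'iff (j, u) (Finset.mk_mem_product hj hu) true).mp (h u)
        · intro h u
          by_contra hc
          have hQ' : ∃ u, ¬ Q j u := ⟨u, hc⟩
          have hwfj : wf j = some hQ'.choose := by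
            rw [hwf]; exact dif_pos hQ'
          have hmem : hQ'.choose ∈ L0 := by
            rw [hL0]
            exact Finset.mem_biUnion.mpr ⟨j, hj, Finset.mem_union_right _
              (by simp [hwfj])⟩
          have := (hL'iff (j, hQ'.choose)
            (Finset.mk_mem_product hj hmem) true).mpr (h _ hmem)
          exact hQ'.choose_spec this
      · -- b = true : ∃ case
        rw [alt_succ_true, alt_succ_true]
        simp only [Set.mem_univ, true_and, Fin.cons_succ, Fin.cons_zero,
          Finset.mem_coe]
        constructor
        · rintro ⟨u, hu⟩
          have hP' : ∃ u, P j u := ⟨u, hu⟩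
          have hwtj : wt j = some hP'.choose := by
            rw [hwt]; exact dif_pos hP'
          have hmem : hP'.choose ∈ L0 := by
            rw [hL0]
            exact Finset.mem_biUnion.mpr ⟨j, hj, Finset.mem_union_left _
              (by simp [hwtj])⟩
          refine ⟨hP'.choose, hmem, ?_⟩
          exact (hL'iff (j, hP'.choose)
            (Finset.mk_mem_product hj hmem) false).mp hP'.choose_spec
        · rintro ⟨u, hu, hAlt⟩
          exact ⟨u, (hL'iff (j, u)
            (Finset.mk_mem_product hj hu) false).mpr hAlt⟩

private lemma two_pow_sum (k : ℕ) : ∑ i ∈ Finset.range k, 2 ^ i = 2 ^ k - 1 := by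
  induction k with
  | zero => simp
  | succ n ihn =>
    have h1 : 1 ≤ 2 ^ n := Nat.one_le_two_pow
    rw [Finset.sum_range_succ, ihn]
    have : 2 ^ (n + 1) = 2 * 2 ^ n := by ring
    omega

/-- Abstract form of the lemma `ConstrainedQuantifierRanges`: all quantifier ranges can
simultaneously be replaced by finite sets `L i` with `|L i| ≤ (2|ℱ|)^(2^i)` (0-indexed,
corresponding to the paper's `(2|ℱ|)^(2^{i-1})` for `1 ≤ i ≤ k`), without changing the
truth value of any of the alternating quantified sentences built from predicates in `ℱ`. -/
theorem constrained_quantifier_ranges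
    {X : Type*} {ι : Type*} (k : ℕ) (hk : 1 ≤ k)
    (F : Finset ι) (f : ι → (Fin k → X) → Prop) :
    ∃ L : Fin k → Finset X,
      (∀ i : Fin k, (L i).card ≤ (2 * F.card) ^ 2 ^ (i : ℕ)) ∧
      (∏ i, (L i).card) ≤ (2 * F.card) ^ 2 ^ k ∧
      ∀ j ∈ F,
        (Alt true k (fun _ => Set.univ) (f j) ↔
          Alt true k (fun i => (↑(L i) : Set X)) (f j)) ∧
        (Alt false k (fun _ => Set.univ) (f j) ↔
          Alt false k (fun i => (↑(L i) : Set X)) (f j)) := by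
  obtain ⟨L, hcard, hiff⟩ := alt_helper (X := X) k
    (F.map ⟨ULift.up.{u_1}, fun _ _ h => congrArg ULift.down h⟩)
    (fun j => f j.down)
  rw [Finset.card_map] at hcard
  have hiff' : ∀ j ∈ F, ∀ b : Bool,
      (Alt b k (fun _ => Set.univ) (f j) ↔
        Alt b k (fun i => (↑(L i) : Set X)) (f j)) := by
    intro j hj b
    exact hiff ⟨j⟩ (Finset.mem_map_of_mem _ hj) b
  refine ⟨L, hcard, ?_, fun j hj => ⟨hiff' j hj true, hiff' j hj false⟩⟩
  have hsum : ∑ i ∈ Finset.range k, 2 ^ i = 2 ^ k - 1 := two_pow_sum k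
  calc (∏ i, (L i).card) ≤ ∏ i : Fin k, (2 * F.card) ^ 2 ^ (i : ℕ) :=
        Finset.prod_le_prod (fun _ _ => Nat.zero_le _) (fun i _ => hcard i)
    _ = ∏ i ∈ Finset.range k, (2 * F.card) ^ 2 ^ i :=
        Fin.prod_univ_eq_prod_range (fun i => (2 * F.card) ^ 2 ^ i) k
    _ = (2 * F.card) ^ (∑ i ∈ Finset.range k, 2 ^ i) := by
        rw [Finset.prod_pow_eq_pow_sum]
    _ = (2 * F.card) ^ (2 ^ k - 1) := by rw [hsum]
    _ ≤ (2 * F.card) ^ 2 ^ k := by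
        rcases Nat.eq_zero_or_pos (2 * F.card) with h | h
        · rw [h]
          have h1 : 1 ≤ 2 ^ k - 1 := by
            have : 2 ≤ 2 ^ k := by
              calc 2 = 2 ^ 1 := (pow_one 2).symm
                _ ≤ 2 ^ k := Nat.pow_le_pow_right (by norm_num) hk
            omega
          rw [Nat.zero_pow (by omega : 0 < 2 ^ k - 1),
            Nat.zero_pow (by positivity : 0 < 2 ^ k)]
        · exact Nat.pow_le_pow_right h (Nat.sub_le _ _)

end Stmt2
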